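/- Let Z ⊆ ℝ^d × ℝ be a polytope, let Ω = {ω ∈ ℝ^d : (ω, y) ∈ Z for some y} be its projection (a polytope), and define f : Ω → ℝ by f(ω) = max{y : (ω, y) ∈ Z}. Then f is a concave continuous piecewise linear function, and there exists a triangulation γ of Ω such that f = I(f, γ) and every vertex v of every simplex of γ satisfies that (v, f(v)) is a vertex (extreme point) of Z. -/

import Mathlib

open Finset

/-- A polytope is the convex hull of a finite set of points. -/
def IsPolytope {E : Type*} [AddCommGroup E] [Module ℝ E] (S : Set E) : Prop :=
  ∃ F : Finset E, S = convexHull ℝ (F : Set E)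

/-- `f` is (continuous) piecewise linear on `Ω`: finitely many polytopes cover `Ω`
and `f` agrees with an affine function on each of them. -/
def IsPWLOn {E : Type*} [AddCommGroup E] [Module ℝ E] (Ω : Set E) (f : E → ℝ) : Prop :=
  ∃ (k : ℕ) (C : Fin k → Set E), (∀ i, IsPolytope (C i)) ∧ (⋃ i, C i) = Ω ∧
    ∀ i, ∃ g : E →ᵃ[ℝ] ℝ, ∀ x ∈ C i, f x = g x

/-- A triangulation of `Ω`, encoded by the vertex sets of its simplices. -/
structure Triangulation (E : Type*) [AddCommGroup E] [Module ℝ E] (Ω : Set E) where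
  simplices : Finset (Finset E)
  indep : ∀ V ∈ simplices, AffineIndependent ℝ (fun v : (V : Set E) => (v : E))
  faces : ∀ V ∈ simplices, ∀ W ⊆ V, W ∈ simplices
  inter : ∀ V ∈ simplices, ∀ W ∈ simplices, ∃ Z ∈ simplices, Z ⊆ V ∧ Z ⊆ W ∧
    convexHull ℝ (V : Set E) ∩ convexHull ℝ (W : Set E) = convexHull ℝ (Z : Set E)
  covers : (⋃ V ∈ simplices, convexHull ℝ (V : Set E)) = Ω

/-- `α` is the system of weights of a convex-combination representation of `ω`
with vertex set contained in `V` (weight zero outside `V`). -/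
def IsConvexWeight {E : Type*} [AddCommGroup E] [Module ℝ E]
    (V : Finset E) (α : E → ℝ) (ω : E) : Prop :=
  (∀ v, 0 ≤ α v) ∧ (∀ v ∉ V, α v = 0) ∧ (∑ v ∈ V, α v) = 1 ∧ (∑ v ∈ V, α v • v) = ω

/-- `F` is the triangulation-based interpolation `I(f, γ)` (on `Ω`). -/
def IsInterpolation {E : Type*} [AddCommGroup E] [Module ℝ E] {Ω : Set E}
    (γ : Triangulation E Ω) (f F : E → ℝ) : Prop :=
  ∀ V ∈ γ.simplices, ∀ α : E → ℝ, (∀ v ∈ V, 0 ≤ α v) → (∑ v ∈ V, α v) = 1 →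
    F (∑ v ∈ V, α v • v) = ∑ v ∈ V, α v * f v

/-- The concave closure of `f` on `Ω`. -/
noncomputable def cav {E : Type*} [AddCommGroup E] [Module ℝ E]
    (Ω : Set E) (f : E → ℝ) (ω : E) : ℝ :=
  sSup {z : ℝ | (ω, z) ∈ convexHull ℝ {p : E × ℝ | p.1 ∈ Ω ∧ p.2 = f p.1}}

/-!
The upper boundary `f` is concave because `Z` is convex. Writing a lift `(x, f x)` as a convex
combination of extreme points of `Z`, concavity forces all of them onto the graph of `f`; so the
projections `V` of the extreme points on the graph span `Ω`, and an affine function above `f` on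
`V` stays above `f` on all of `Ω`.

The triangulation is the regular subdivision of `V` for the heights `f`, refined by generic heights
`w`: a simplex is a set of points where some affine majorant of `f` on `V` touches `f`, and some
affine majorant of `w` on that contact set touches `w`. Genericity of `w` makes the cells affinely
independent; comparing the majorants of two cells at a common point shows that cells meet along
common faces; and LP duality (Farkas' lemma, via closedness of finitely generated cones) shows that
the cells cover `conv V`. On a cell, `f` is squeezed between its affine majorant and, by concavity,
the interpolation of its vertex values; this gives `f = I(f, γ)`, piecewise linearity and
continuity.
-/

section ConvexCombination

variable {ι E : Type*} [AddCommGroup E] [Module ℝ E]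

theorem sum_smul_mem_convexHull_of_ne_zero {t : Finset ι} {w : ι → ℝ} {z : ι → E} {s : Set E}
    (hw₀ : ∀ i ∈ t, 0 ≤ w i) (hw₁ : ∑ i ∈ t, w i = 1) (hz : ∀ i ∈ t, w i ≠ 0 → z i ∈ s) :
    ∑ i ∈ t, w i • z i ∈ convexHull ℝ s := by
  classical
  rw [← Finset.sum_filter_of_ne (p := (w · ≠ 0)) fun i _ h hw => h (by simp [hw])] at hw₁ ⊢
  exact (convex_convexHull ℝ s).sum_mem (fun i hi => hw₀ i (Finset.mem_filter.1 hi).1) hw₁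
    fun i hi => subset_convexHull ℝ s (hz i (Finset.mem_filter.1 hi).1 (Finset.mem_filter.1 hi).2)

theorem AffineMap.apply_sum_smul (u : E →ᵃ[ℝ] ℝ) {t : Finset ι} {α : ι → ℝ} {p : ι → E}
    (h : ∑ i ∈ t, α i = 1) : u (∑ i ∈ t, α i • p i) = ∑ i ∈ t, α i * u (p i) := by
  rw [← t.affineCombination_eq_linear_combination p α h, t.map_affineCombination p α h,
    t.affineCombination_eq_linear_combination _ α h]
  rfl

theorem AffineMap.sum_mul_eq_zero (u : E →ᵃ[ℝ] ℝ) {t : Finset ι} {μ : ι → ℝ} {p : ι → E}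
    (h₀ : ∑ i ∈ t, μ i = 0) (h₁ : ∑ i ∈ t, μ i • p i = 0) : ∑ i ∈ t, μ i * u (p i) = 0 := by
  have hu : ∀ i, μ i * u (p i) = u.linear (μ i • p i) + μ i * u 0 := fun i => by
    rw [congrFun u.decomp (p i), Pi.add_apply, map_smul, smul_eq_mul, mul_add]
  rw [Finset.sum_congr rfl fun i _ => hu i, Finset.sum_add_distrib, ← map_sum, h₁, map_zero,
    ← Finset.sum_mul, h₀, zero_mul, add_zero]

theorem AffineMap.concaveOn (g : E →ᵃ[ℝ] ℝ) {s : Set E} (hs : Convex ℝ s) : ConcaveOn ℝ s g :=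
  ⟨hs, fun _ _ _ _ _ _ _ _ hab => (Convex.combo_affine_apply hab).ge⟩

theorem AffineMap.convexOn (g : E →ᵃ[ℝ] ℝ) {s : Set E} (hs : Convex ℝ s) : ConvexOn ℝ s g :=
  ⟨hs, fun _ _ _ _ _ _ _ _ hab => (Convex.combo_affine_apply hab).le⟩

theorem ConcaveOn.nonneg_of_mem_convexHull {s t : Set E} {φ : E → ℝ} {x : E}
    (hφ : ConcaveOn ℝ s φ) (hts : t ⊆ s) (hnonneg : ∀ v ∈ t, 0 ≤ φ v)
    (hx : x ∈ convexHull ℝ t) : 0 ≤ φ x :=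
  (convexHull_min (t := {v ∈ s | 0 ≤ φ v}) (fun v hv => ⟨hts hv, hnonneg v hv⟩)
    (hφ.convex_ge 0) hx).2

theorem ConcaveOn.mem_convexHull_setOf_eq_zero {s t : Set E} {φ : E → ℝ} {x : E}
    (hφ : ConcaveOn ℝ s φ) (hts : t ⊆ s) (hnonneg : ∀ v ∈ t, 0 ≤ φ v)
    (hx : x ∈ convexHull ℝ t) (hφx : φ x ≤ 0) : x ∈ convexHull ℝ {v ∈ t | φ v = 0} := by
  obtain ⟨κ, _, a, z, ha₀, ha₁, hz, rfl⟩ := mem_convexHull_iff_exists_fintype.1 hx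
  have hterm : ∀ i ∈ Finset.univ, 0 ≤ a i * φ (z i) := fun i _ =>
    mul_nonneg (ha₀ i) (hnonneg _ (hz i))
  have hsum : ∑ i, a i * φ (z i) = 0 := le_antisymm
    ((hφ.le_map_sum (fun i _ => ha₀ i) ha₁ fun i _ => hts (hz i)).trans hφx)
    (Finset.sum_nonneg hterm)
  have hzero := (Finset.sum_eq_zero_iff_of_nonneg hterm).1 hsum
  exact sum_smul_mem_convexHull_of_ne_zero (fun i _ => ha₀ i) ha₁ fun i hi hai =>
    ⟨hz i, (mul_eq_zero.1 (hzero i hi)).resolve_left hai⟩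

theorem AffineMap.le_and_mem_convexHull_filter_eq {W : Finset E} {a b : E →ᵃ[ℝ] ℝ} {x : E}
    (hle : ∀ v ∈ W, a v ≤ b v) (hx : x ∈ convexHull ℝ (W : Set E)) :
    a x ≤ b x ∧ (b x ≤ a x → x ∈ convexHull ℝ ↑(W.filter fun v => a v = b v)) := by
  classical
  have hφ := (b - a).concaveOn (s := Set.univ) convex_univ
  have hnonneg : ∀ v ∈ (W : Set E), 0 ≤ (b - a) v := fun v hv => by simpa using hle v hv
  refine ⟨by simpa using hφ.nonneg_of_mem_convexHull (Set.subset_univ _) hnonneg hx,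
    fun hba => ?_⟩
  convert hφ.mem_convexHull_setOf_eq_zero (Set.subset_univ _) hnonneg hx (by simpa using hba)
    using 2
  ext v
  simp [sub_eq_zero, eq_comm (a := a v)]

end ConvexCombination

section FinitelyGeneratedCone

variable {ι E : Type*} [AddCommGroup E] [Module ℝ E]

theorem exists_sub_mul_nonneg_eq_zero {s : Finset ι} {c μ : ι → ℝ} (hc : ∀ i ∈ s, 0 ≤ c i)
    (hμ : ∃ i ∈ s, 0 < μ i) :
    ∃ t : ℝ, ∃ a ∈ s, (∀ i ∈ s, 0 ≤ c i - t * μ i) ∧ c a - t * μ a = 0 := by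
  classical
  obtain ⟨a, ha, hmin⟩ := (s.filter (0 < μ ·)).exists_min_image (fun i => c i / μ i)
    (by simpa [Finset.filter_nonempty_iff] using hμ)
  rw [Finset.mem_filter] at ha
  refine ⟨c a / μ a, a, ha.1, fun i hi => ?_, by field_simp [ha.2.ne']; ring⟩
  rcases le_or_gt (μ i) 0 with hi' | hi'
  · nlinarith [hc i hi, div_nonneg (hc a ha.1) ha.2.le]
  · linarith [(le_div_iff₀ hi').1 (hmin i (Finset.mem_filter.2 ⟨hi, hi'⟩))]

namespace PointedCone

theorem mem_hull_image_finset_iff {g : ι → E} {s : Finset ι} {z : E} :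
    z ∈ hull ℝ (g '' s) ↔ ∃ c : ι → ℝ, (∀ i ∈ s, 0 ≤ c i) ∧ ∑ i ∈ s, c i • g i = z := by
  rw [Submodule.mem_span_image_finset_iff_exists_fun']
  constructor
  · rintro ⟨c, rfl⟩
    exact ⟨fun i => c i, fun i _ => (c i).2, by simp⟩
  · rintro ⟨c, hc, rfl⟩
    refine ⟨fun i => (c i).toNNReal, Finset.sum_congr rfl fun i hi => ?_⟩
    change ((c i).toNNReal : ℝ) • g i = c i • g i
    rw [Real.coe_toNNReal _ (hc i hi)]

theorem mem_hull_range_iff [Fintype ι] {g : ι → E} {z : E} :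
    z ∈ hull ℝ (Set.range g) ↔ ∃ c : ι → ℝ, 0 ≤ c ∧ ∑ i, c i • g i = z := by
  rw [← Set.image_univ, ← Finset.coe_univ, mem_hull_image_finset_iff]
  simp [Pi.le_def]

theorem hull_image_eq_biUnion_erase [DecidableEq ι] {g : ι → E} {s : Finset ι}
    (hs : ¬LinearIndepOn ℝ g s) :
    (hull ℝ (g '' s) : Set E) = ⋃ a ∈ s, (hull ℝ (g '' ↑(s.erase a)) : Set E) := by
  refine subset_antisymm (fun z hz => ?_) (Set.iUnion₂_subset fun a _ =>
    Submodule.span_mono (Set.image_mono (Finset.coe_subset.2 (s.erase_subset a))))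
  obtain ⟨c, hc, rfl⟩ := mem_hull_image_finset_iff.1 hz
  obtain ⟨μ, hμ, hpos⟩ : ∃ μ : ι → ℝ, ∑ i ∈ s, μ i • g i = 0 ∧ ∃ i ∈ s, 0 < μ i := by
    simp only [linearIndepOn_finset_iff, not_forall] at hs
    obtain ⟨μ, hμ, i, hi, hμi⟩ := hs
    rcases lt_or_gt_of_ne hμi with h | h
    · exact ⟨-μ, by simp [neg_smul, hμ], i, hi, by simpa using h⟩
    · exact ⟨μ, hμ, i, hi, h⟩
  obtain ⟨t, a, ha, hnonneg, hzero⟩ := exists_sub_mul_nonneg_eq_zero hc hpos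
  refine Set.mem_biUnion ha (mem_hull_image_finset_iff.2
    ⟨fun i => c i - t * μ i, fun i hi => hnonneg i (Finset.mem_of_mem_erase hi), ?_⟩)
  rw [Finset.sum_erase _ (by simp only [hzero, zero_smul])]
  simp only [sub_smul, mul_smul, Finset.sum_sub_distrib, ← Finset.smul_sum, hμ, smul_zero,
    sub_zero]

variable [TopologicalSpace E] [IsTopologicalAddGroup E] [ContinuousSMul ℝ E] [T2Space E]

theorem isClosed_hull_image_finset (g : ι → E) (s : Finset ι) :
    IsClosed (hull ℝ (g '' s) : Set E) := by
  classical
  induction s using Finset.strongInduction with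
  | H s ih =>
    by_cases hs : LinearIndepOn ℝ g s
    · set L := Fintype.linearCombination ℝ fun i : s => g i
      have hL : (hull ℝ (g '' s) : Set E) = L '' Set.Ici 0 := by
        ext z
        rw [Set.image_eq_range, SetLike.mem_coe, mem_hull_range_iff]
        simp [L, Fintype.linearCombination_apply]
      rw [hL]
      exact (LinearMap.isClosedEmbedding_of_injective (LinearMap.ker_eq_bot.2
        (linearIndependent_iff_injective_fintypeLinearCombination.1 hs))).isClosedMap _
        isClosed_Ici
    · rw [hull_image_eq_biUnion_erase hs]
      exact isClosed_biUnion_finset fun a ha => ih _ (Finset.erase_ssubset ha)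

theorem exists_dual_of_notMem_hull_range [LocallyConvexSpace ℝ E] [Fintype ι] (g : ι → E)
    {z : E} (hz : z ∉ hull ℝ (Set.range g)) :
    ∃ φ : StrongDual ℝ E, (∀ i, 0 ≤ φ (g i)) ∧ φ z < 0 := by
  have hclosed : IsClosed (hull ℝ (Set.range g) : Set E) := by
    simpa using isClosed_hull_image_finset g Finset.univ
  obtain ⟨φ, hφ, hφz⟩ :=
    ProperCone.hyperplane_separation_point ⟨hull ℝ (Set.range g), hclosed⟩ (x₀ := z) hz
  exact ⟨φ, fun i => hφ _ (subset_hull ⟨i, rfl⟩), hφz⟩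

end PointedCone

end FinitelyGeneratedCone

section LinearProgramming

variable {ι E : Type*} [Fintype ι] [AddCommGroup E] [Module ℝ E]

def convexWeights (p : ι → E) (x : E) : Set (ι → ℝ) :=
  stdSimplex ℝ ι ∩ {β | ∑ i, β i • p i = x}

variable {p : ι → E} {w : ι → ℝ} {x : E} {α : ι → ℝ}

open Filter Topology in
theorem sum_mul_nonpos_of_isMaxOn (hα : α ∈ convexWeights p x)
    (hmax : IsMaxOn (fun β => ∑ i, β i * w i) (convexWeights p x) α) {ν : ι → ℝ}
    (hν : ∀ i, α i = 0 → 0 ≤ ν i) (hν₁ : ∑ i, ν i = 0) (hνp : ∑ i, ν i • p i = 0) :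
    ∑ i, ν i * w i ≤ 0 := by
  have hev : ∀ᶠ t in 𝓝[>] (0 : ℝ), 0 < t ∧ ∀ i, 0 ≤ α i + t * ν i := by
    refine eventually_mem_nhdsWithin.and (eventually_all.2 fun i => ?_)
    rcases (hα.1.1 i).eq_or_lt with h | h
    · filter_upwards [self_mem_nhdsWithin] with t ht
      rw [← h, zero_add]
      exact mul_nonneg (le_of_lt ht) (hν i h.symm)
    · have hlim : Tendsto (fun t : ℝ => α i + t * ν i) (𝓝 0) (𝓝 (α i)) :=
        (continuous_const.add (continuous_id.mul continuous_const)).tendsto' _ _ (by simp)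
      exact nhdsWithin_le_nhds ((hlim.eventually (lt_mem_nhds h)).mono fun _ h => h.le)
  obtain ⟨t, ht, hnonneg⟩ := hev.exists
  have hmem : α + t • ν ∈ convexWeights p x := by
    refine ⟨⟨fun i => hnonneg i, ?_⟩, ?_⟩
    · simp [Finset.sum_add_distrib, ← Finset.mul_sum, hν₁, hα.1.2]
    · simpa [add_smul, Finset.sum_add_distrib, mul_smul, ← Finset.smul_sum, hνp] using hα.2
  have := hmax hmem
  simp only [Set.mem_ofPred_eq, Pi.add_apply, Pi.smul_apply, smul_eq_mul, add_mul,
    Finset.sum_add_distrib, mul_assoc, ← Finset.mul_sum] at this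
  nlinarith

variable [TopologicalSpace E] [IsTopologicalAddGroup E] [ContinuousSMul ℝ E] [T2Space E]
  [LocallyConvexSpace ℝ E]

theorem exists_dual_of_isMaxOn (hα : α ∈ convexWeights p x)
    (hmax : IsMaxOn (fun β => ∑ i, β i * w i) (convexWeights p x) α) :
    ∃ φ : StrongDual ℝ (E × ℝ × ℝ), (∀ i, 0 ≤ φ (p i, 1, w i)) ∧
      (∀ i, α i ≠ 0 → φ (p i, 1, w i) = 0) ∧ φ ((0 : E), (0 : ℝ), (1 : ℝ)) < 0 := by
  set lift : ι → E × ℝ × ℝ := fun i => (p i, 1, w i)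
  -- a cone combination equal to `(0, 0, 1)` would be a direction improving on `α`
  have hz : ((0 : E), (0 : ℝ), (1 : ℝ)) ∉
      PointedCone.hull ℝ (Set.range (Sum.elim lift fun i => -α i • lift i)) := by
    rw [PointedCone.mem_hull_range_iff]
    rintro ⟨c, hc, hsum⟩
    set ν : ι → ℝ := fun i => c (.inl i) - c (.inr i) * α i
    have hν : ∑ i, ν i • lift i = ((0 : E), (0 : ℝ), (1 : ℝ)) := by
      rw [← hsum, Fintype.sum_sum_type, ← Finset.sum_add_distrib]
      refine Finset.sum_congr rfl fun i _ => ?_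
      simp only [ν, Sum.elim_inl, Sum.elim_inr]
      module
    simp only [lift, Prod.ext_iff, Prod.fst_sum, Prod.snd_sum, Prod.smul_mk, smul_eq_mul,
      mul_one] at hν
    have := sum_mul_nonpos_of_isMaxOn hα hmax (ν := ν)
      (fun i hi => by simpa [ν, hi] using hc (.inl i)) hν.2.1 hν.1
    linarith [hν.2.2]
  obtain ⟨φ, hφ, hφz⟩ := PointedCone.exists_dual_of_notMem_hull_range _ hz
  refine ⟨φ, fun i => hφ (.inl i), fun i hi => le_antisymm ?_ (hφ (.inl i)), hφz⟩
  have hαi : 0 < α i := lt_of_le_of_ne (hα.1.1 i) (Ne.symm hi)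
  have : 0 ≤ -(α i * φ (lift i)) := by simpa using hφ (.inr i)
  nlinarith

theorem exists_affine_majorant_of_isMaxOn (hα : α ∈ convexWeights p x)
    (hmax : IsMaxOn (fun β => ∑ i, β i * w i) (convexWeights p x) α) :
    ∃ u : E →ᵃ[ℝ] ℝ, (∀ i, w i ≤ u (p i)) ∧ ∀ i, α i ≠ 0 → u (p i) = w i := by
  obtain ⟨φ, hφ, hφα, hφz⟩ := exists_dual_of_isMaxOn hα hmax
  set γ := φ ((0 : E), (0 : ℝ), (1 : ℝ)) with hγ
  -- the hyperplane `φ = 0`, solved for the last coordinate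
  set u : E →ᵃ[ℝ] ℝ := (-γ)⁻¹ • (((φ : E × ℝ × ℝ →ₗ[ℝ] ℝ).comp
    (LinearMap.inl ℝ E (ℝ × ℝ))).toAffineMap + AffineMap.const ℝ E (φ ((0 : E), (1 : ℝ), (0 : ℝ))))
  have hu : ∀ i, u (p i) * (-γ) = φ (p i, 1, w i) - w i * γ := by
    intro i
    have hsplit : ((p i, 1, w i) : E × ℝ × ℝ) =
        (p i, 0, 0) + ((0 : E), (1 : ℝ), (0 : ℝ)) + w i • ((0 : E), (0 : ℝ), (1 : ℝ)) := by
      simp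
    rw [hsplit, map_add, map_add, map_smul, smul_eq_mul]
    simp only [u, AffineMap.coe_smul, AffineMap.coe_add, Pi.smul_apply, Pi.add_apply,
      AffineMap.const_apply, LinearMap.coe_toAffineMap, smul_eq_mul]
    field_simp [hφz.ne]
    rw [← hγ]
    change φ (p i, 0, 0) + _ = _
    ring
  exact ⟨u, fun i => by nlinarith [hφ i, hu i], fun i hi => by nlinarith [hφα i hi, hu i]⟩

theorem exists_touching_affine_majorant (S : Finset E) (w : E → ℝ) {x : E}
    (hx : x ∈ convexHull ℝ (S : Set E)) :
    ∃ u : E →ᵃ[ℝ] ℝ, (∀ p ∈ S, w p ≤ u p) ∧ x ∈ convexHull ℝ ↑(S.filter fun p => u p = w p) := by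
  classical
  obtain ⟨a, ha₀, ha₁, hax⟩ := Finset.mem_convexHull'.1 hx
  have hne : (convexWeights ((↑) : S → E) x).Nonempty :=
    ⟨fun i => a i, ⟨fun i => ha₀ i i.2, by rwa [Finset.sum_coe_sort S a]⟩,
      by rwa [Set.mem_ofPred_eq, Finset.sum_coe_sort S fun p => a p • p]⟩
  have hcompact : IsCompact (convexWeights ((↑) : S → E) x) :=
    (isCompact_stdSimplex ℝ S).inter_right (isClosed_eq
      (continuous_finsetSum _ fun i _ => (continuous_apply i).smul continuous_const)
      continuous_const)
  obtain ⟨α, hα, hmax⟩ := hcompact.exists_isMaxOn hne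
    (continuous_finsetSum _ fun i _ => (continuous_apply i).mul continuous_const).continuousOn
  obtain ⟨u, hwu, htight⟩ := exists_affine_majorant_of_isMaxOn (w := fun i : S => w i) hα hmax
  refine ⟨u, fun p hp => hwu ⟨p, hp⟩, ?_⟩
  rw [← hα.2]
  exact sum_smul_mem_convexHull_of_ne_zero (fun i _ => hα.1.1 i) hα.1.2
    fun i _ hi => Finset.mem_filter.2 ⟨i.2, htight i hi⟩

end LinearProgramming

section GenericLift

variable {E : Type*} [AddCommGroup E] [Module ℝ E]

def IsGenericLift (V : Finset E) (w : E → ℝ) : Prop :=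
  ∀ T ⊆ V, ∀ u : E →ᵃ[ℝ] ℝ, (∀ v ∈ T, u v = w v) → AffineIndependent ℝ ((↑) : T → E)

theorem exists_isGenericLift (V : Finset E) : ∃ w : E → ℝ, IsGenericLift V w := by
  classical
  set D := V.powerset.filter fun T : Finset E => ¬AffineIndependent ℝ ((↑) : T → E)
  have hdep : ∀ T : D, ∃ (t : Finset T.1) (μ : T.1 → ℝ), ∑ i ∈ t, μ i = 0 ∧
      ∑ i ∈ t, μ i • (i : E) = 0 ∧ ∃ i ∈ t, μ i ≠ 0 := by
    intro T
    simpa [affineIndependent_iff] using (Finset.mem_filter.1 T.2).2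
  choose t μ hμ₀ hμ₁ hμ using hdep
  -- `w` avoids the kernels of the functionals `w ↦ ∑ μ i * w i`, which kill heights affine on `T`
  obtain ⟨w, hw⟩ := Module.Dual.exists_forall_ne_zero_of_forall_exists
    (fun T : D => ∑ i ∈ t T, μ T i • LinearMap.proj (R := ℝ) (φ := fun _ : E => ℝ) (i : E))
    fun T => by
      obtain ⟨i, hi, hμi⟩ := hμ T
      refine ⟨Pi.single (i : E) 1, ?_⟩
      simpa [Pi.single_apply, Subtype.val_inj, hi] using hμi
  refine ⟨w, fun T hT u hu => by_contra fun hT' => ?_⟩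
  have hTD : T ∈ D := Finset.mem_filter.2 ⟨Finset.mem_powerset.2 hT, hT'⟩
  refine hw ⟨T, hTD⟩ ?_
  have := u.sum_mul_eq_zero (p := ((↑) : T → E)) (hμ₀ ⟨T, hTD⟩) (hμ₁ ⟨T, hTD⟩)
  simpa [hu _ (Subtype.coe_prop _)] using this

end GenericLift

section RegularSubdivision

variable {E : Type*} [AddCommGroup E] [Module ℝ E]

/-- Cells of the regular subdivision of `V` for the lifting heights `f`, refined lexicographically
by the lifting heights `w`. -/
def IsRegularCell (V : Finset E) (f w : E → ℝ) (W : Finset E) : Prop :=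
  W ⊆ V ∧ ∃ g u : E →ᵃ[ℝ] ℝ, (∀ p ∈ V, f p ≤ g p) ∧ (∀ p ∈ V, g p = f p → w p ≤ u p) ∧
    ∀ v ∈ W, g v = f v ∧ u v = w v

variable {V W W₁ W₂ : Finset E} {f w : E → ℝ}

theorem IsRegularCell.mono (h : IsRegularCell V f w W) (hW : W₁ ⊆ W) :
    IsRegularCell V f w W₁ :=
  let ⟨hWV, g, u, hg, hu, hgu⟩ := h
  ⟨hW.trans hWV, g, u, hg, hu, fun v hv => hgu v (hW hv)⟩

theorem IsRegularCell.affineIndependent (hw : IsGenericLift V w) (h : IsRegularCell V f w W) :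
    AffineIndependent ℝ ((↑) : W → E) :=
  let ⟨hWV, _, u, _, _, hgu⟩ := h
  hw W hWV u fun v hv => (hgu v hv).2

theorem IsRegularCell.convexHull_inter [DecidableEq E] (hw : IsGenericLift V w)
    (h₁ : IsRegularCell V f w W₁) (h₂ : IsRegularCell V f w W₂) :
    convexHull ℝ ↑W₁ ∩ convexHull ℝ ↑W₂ = convexHull ℝ (↑(W₁ ∩ W₂) : Set E) := by
  obtain ⟨hW₁, g₁, u₁, hg₁, hu₁, ht₁⟩ := h₁
  obtain ⟨hW₂, g₂, u₂, hg₂, hu₂, ht₂⟩ := h₂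
  refine subset_antisymm (fun x ⟨hx₁, hx₂⟩ => ?_) (Set.subset_inter
    (convexHull_mono (by simp)) (convexHull_mono (by simp)))
  have hg₁₂ := AffineMap.le_and_mem_convexHull_filter_eq
    (fun v hv => (ht₁ v hv).1 ▸ hg₂ v (hW₁ hv)) hx₁
  have hg₂₁ := AffineMap.le_and_mem_convexHull_filter_eq
    (fun v hv => (ht₂ v hv).1 ▸ hg₁ v (hW₂ hv)) hx₂
  -- where `g₁ = g₂` both refining majorants dominate `w`, so the argument repeats for `u₁, u₂`
  have hu₁₂ := AffineMap.le_and_mem_convexHull_filter_eq (a := u₁) (b := u₂) (fun v hv => by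
    obtain ⟨hv, hgv⟩ := Finset.mem_filter.1 hv
    rw [(ht₁ v hv).2]
    exact hu₂ v (hW₁ hv) (hgv ▸ (ht₁ v hv).1)) (hg₁₂.2 hg₂₁.1)
  have hu₂₁ := AffineMap.le_and_mem_convexHull_filter_eq (a := u₂) (b := u₁) (fun v hv => by
    obtain ⟨hv, hgv⟩ := Finset.mem_filter.1 hv
    rw [(ht₂ v hv).2]
    exact hu₁ v (hW₂ hv) (hgv ▸ (ht₂ v hv).1)) (hg₂₁.2 hg₁₂.1)
  set A := (W₁.filter fun v => g₁ v = g₂ v).filter fun v => u₁ v = u₂ v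
  set B := (W₂.filter fun v => g₂ v = g₁ v).filter fun v => u₂ v = u₁ v
  have hAW : A ⊆ W₁ := (Finset.filter_subset _ _).trans (Finset.filter_subset _ _)
  have hBW : B ⊆ W₂ := (Finset.filter_subset _ _).trans (Finset.filter_subset _ _)
  have hAB : AffineIndependent ℝ ((↑) : ↑(A ∪ B) → E) := by
    refine hw _ (Finset.union_subset (hAW.trans hW₁) (hBW.trans hW₂)) u₁ fun v hv => ?_
    rcases Finset.mem_union.1 hv with hv | hv
    · exact (ht₁ v (hAW hv)).2
    · rw [← (Finset.mem_filter.1 hv).2]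
      exact (ht₂ v (hBW hv)).2
  have hx : x ∈ convexHull ℝ (↑(A ∩ B) : Set E) := by
    rw [Finset.coe_inter, hAB.convexHull_inter']
    exact ⟨hu₁₂.2 hu₂₁.1, hu₂₁.2 hu₁₂.1⟩
  exact convexHull_mono (Finset.coe_subset.2 (Finset.inter_subset_inter hAW hBW)) hx

open Classical in
noncomputable def regularCells (V : Finset E) (f w : E → ℝ) : Finset (Finset E) :=
  V.powerset.filter (IsRegularCell V f w)

theorem mem_regularCells : W ∈ regularCells V f w ↔ IsRegularCell V f w W := by
  classical
  simp only [regularCells, Finset.mem_filter, Finset.mem_powerset, and_iff_right_iff_imp]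
  exact And.left

variable [TopologicalSpace E] [IsTopologicalAddGroup E] [ContinuousSMul ℝ E] [T2Space E]
  [LocallyConvexSpace ℝ E]

theorem biUnion_regularCells_convexHull (V : Finset E) (f w : E → ℝ) :
    ⋃ W ∈ regularCells V f w, convexHull ℝ (W : Set E) = convexHull ℝ ↑V := by
  classical
  refine subset_antisymm (Set.iUnion₂_subset fun W hW =>
    convexHull_mono (Finset.coe_subset.2 (mem_regularCells.1 hW).1)) fun x hx => ?_
  obtain ⟨g, hg, hxg⟩ := exists_touching_affine_majorant V f hx
  obtain ⟨u, hu, hxu⟩ := exists_touching_affine_majorant _ w hxg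
  refine Set.mem_biUnion (mem_regularCells.2 ⟨fun v hv => ?_, g, u, hg,
    fun p hp hgp => hu p (Finset.mem_filter.2 ⟨hp, hgp⟩), fun v hv => ?_⟩) hxu
  · exact (Finset.mem_filter.1 (Finset.mem_filter.1 hv).1).1
  · exact ⟨(Finset.mem_filter.1 (Finset.mem_filter.1 hv).1).2, (Finset.mem_filter.1 hv).2⟩

theorem exists_triangulation_touching_affine_majorants (V : Finset E) (f : E → ℝ)
    {Ω : Set E} (hΩ : convexHull ℝ ↑V = Ω) :
    ∃ γ : Triangulation E Ω, ∀ W ∈ γ.simplices,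
      W ⊆ V ∧ ∃ g : E →ᵃ[ℝ] ℝ, (∀ p ∈ V, f p ≤ g p) ∧ ∀ v ∈ W, g v = f v := by
  classical
  subst hΩ
  obtain ⟨w, hw⟩ := exists_isGenericLift V
  refine ⟨⟨regularCells V f w, fun W hW => (mem_regularCells.1 hW).affineIndependent hw,
    fun W hW W' hW' => mem_regularCells.2 ((mem_regularCells.1 hW).mono hW'),
    fun W₁ h₁ W₂ h₂ => ⟨W₁ ∩ W₂, mem_regularCells.2 ((mem_regularCells.1 h₁).mono
      Finset.inter_subset_left), Finset.inter_subset_left, Finset.inter_subset_right,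
      (mem_regularCells.1 h₁).convexHull_inter hw (mem_regularCells.1 h₂)⟩,
    biUnion_regularCells_convexHull V f w⟩, fun W hW => ?_⟩
  obtain ⟨hWV, g, _, hg, _, hgW⟩ := mem_regularCells.1 hW
  exact ⟨hWV, g, hg, fun v hv => (hgW v hv).1⟩

end RegularSubdivision
section Polytope

variable {E : Type*} [AddCommGroup E] [Module ℝ E]

theorem IsPolytope.image {F : Type*} [AddCommGroup F] [Module ℝ F] {S : Set E}
    (hS : IsPolytope S) (L : E →ₗ[ℝ] F) : IsPolytope (L '' S) := by
  classical
  obtain ⟨P, rfl⟩ := hS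
  exact ⟨P.image L, by rw [Finset.coe_image, L.image_convexHull]⟩

theorem IsPolytope.convex {S : Set E} (hS : IsPolytope S) : Convex ℝ S := by
  obtain ⟨P, rfl⟩ := hS
  exact convex_convexHull ℝ _

theorem ConcaveOn.eqOn_convexHull_of_affine_majorant {Ω : Set E} {f : E → ℝ}
    {g : E →ᵃ[ℝ] ℝ} {W : Finset E} (hf : ConcaveOn ℝ Ω f) (hWΩ : ↑W ⊆ Ω)
    (hfg : ∀ x ∈ Ω, f x ≤ g x) (hgW : ∀ v ∈ W, g v = f v) :
    Set.EqOn f g (convexHull ℝ ↑W) := by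
  intro x hx
  have hxΩ := convexHull_min hWΩ hf.1 hx
  refine le_antisymm (hfg x hxΩ) (sub_nonneg.1 ?_)
  exact (hf.sub (g.convexOn hf.1)).nonneg_of_mem_convexHull hWΩ
    (fun v hv => by simp [hgW v hv]) hx

theorem isPWLOn_of_biUnion_convexHull {Ω : Set E} {f : E → ℝ} (𝒮 : Finset (Finset E))
    (hcover : ⋃ W ∈ 𝒮, convexHull ℝ (W : Set E) = Ω)
    (haff : ∀ W ∈ 𝒮, ∃ g : E →ᵃ[ℝ] ℝ, Set.EqOn f g (convexHull ℝ ↑W)) : IsPWLOn Ω f := by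
  refine ⟨𝒮.card, fun i => convexHull ℝ ↑(𝒮.equivFin.symm i : Finset E), fun i => ⟨_, rfl⟩,
    ?_, fun i => ?_⟩
  · rw [← hcover, 𝒮.equivFin.symm.surjective.iUnion_comp
      (fun W : 𝒮 => convexHull ℝ ((W : Finset E) : Set E)), Set.iUnion_subtype]
  · obtain ⟨g, hg⟩ := haff _ (𝒮.equivFin.symm i).2
    exact ⟨g, hg⟩

theorem IsPWLOn.continuousOn {E : Type*} [NormedAddCommGroup E] [NormedSpace ℝ E]
    [FiniteDimensional ℝ E] {Ω : Set E} {f : E → ℝ}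
    (h : IsPWLOn Ω f) : ContinuousOn f Ω := by
  obtain ⟨k, C, hC, rfl, hg⟩ := h
  refine (locallyFinite_of_finite C).continuousOn_iUnion (fun i => ?_) fun i => ?_
  · obtain ⟨P, hP⟩ := hC i
    exact hP ▸ (P.finite_toSet.isCompact_convexHull (𝕜 := ℝ)).isClosed
  · obtain ⟨g, hg⟩ := hg i
    exact g.continuous_of_finiteDimensional.continuousOn.congr hg

end Polytope

section UpperBoundary

variable {E : Type*} [AddCommGroup E] [Module ℝ E] {Z : Set (E × ℝ)} {f : E → ℝ}

theorem concaveOn_of_isGreatest (hZ : Convex ℝ Z)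
    (hf : ∀ x ∈ Prod.fst '' Z, IsGreatest {y | (x, y) ∈ Z} (f x)) :
    ConcaveOn ℝ (Prod.fst '' Z) f := by
  refine ⟨hZ.linear_image (LinearMap.fst ℝ E ℝ), fun x hx y hy a b ha hb hab => ?_⟩
  have hmem := hZ (hf x hx).1 (hf y hy).1 ha hb hab
  simp only [Prod.smul_mk, Prod.mk_add_mk, smul_eq_mul] at hmem
  exact (hf _ ⟨_, hmem, rfl⟩).2 hmem

variable [TopologicalSpace E] [IsTopologicalAddGroup E] [ContinuousSMul ℝ E] [T2Space E]
  [LocallyConvexSpace ℝ E]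

theorem IsPolytope.convexHull_extremePoints {S : Set E} (hS : IsPolytope S) :
    (S.extremePoints ℝ).Finite ∧ convexHull ℝ (S.extremePoints ℝ) = S := by
  obtain ⟨P, rfl⟩ := hS
  have hfin : (Set.extremePoints ℝ (convexHull ℝ ↑P)).Finite :=
    P.finite_toSet.subset extremePoints_convexHull_subset
  refine ⟨hfin, ?_⟩
  rw [← (hfin.isCompact_convexHull (𝕜 := ℝ)).isClosed.closure_eq]
  exact closure_convexHull_extremePoints (P.finite_toSet.isCompact_convexHull (𝕜 := ℝ))
    (convex_convexHull ℝ _)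

theorem mem_convexHull_upper_extremePoints (hZ : IsPolytope Z)
    (hf : ∀ x ∈ Prod.fst '' Z, IsGreatest {y | (x, y) ∈ Z} (f x)) {x : E}
    (hx : x ∈ Prod.fst '' Z) :
    (x, f x) ∈ convexHull ℝ {q ∈ Z.extremePoints ℝ | q.2 = f q.1} := by
  have hle : ∀ q ∈ Z, q.2 ≤ f q.1 := fun q hq => (hf q.1 ⟨q, hq, rfl⟩).2 hq
  have hφ : ConcaveOn ℝ Z fun q => f q.1 - q.2 :=
    (((concaveOn_of_isGreatest hZ.convex hf).comp_linearMap (LinearMap.fst ℝ E ℝ)).subset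
      (fun q hq => ⟨q, hq, rfl⟩) hZ.convex).sub ((LinearMap.snd ℝ E ℝ).convexOn hZ.convex)
  have hmem := hφ.mem_convexHull_setOf_eq_zero extremePoints_subset
    (fun q hq => sub_nonneg.2 (hle q hq.1))
    (by rw [hZ.convexHull_extremePoints.2]; exact (hf x hx).1) (by simp)
  simpa [sub_eq_zero, eq_comm] using hmem

theorem exists_upper_vertices (hZ : IsPolytope Z)
    (hf : ∀ x ∈ Prod.fst '' Z, IsGreatest {y | (x, y) ∈ Z} (f x)) :
    ∃ V : Finset E, convexHull ℝ ↑V = Prod.fst '' Z ∧ (∀ v ∈ V, (v, f v) ∈ Z.extremePoints ℝ) ∧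
      ∀ g : E →ᵃ[ℝ] ℝ, (∀ v ∈ V, f v ≤ g v) → ∀ x ∈ Prod.fst '' Z, f x ≤ g x := by
  classical
  set U := {q ∈ Z.extremePoints ℝ | q.2 = f q.1}
  have hU : U.Finite := hZ.convexHull_extremePoints.1.subset fun q hq => hq.1
  have hlift : ∀ q ∈ U, (q.1, f q.1) = q := fun q hq => Prod.ext rfl hq.2.symm
  refine ⟨hU.toFinset.image Prod.fst, subset_antisymm ?_ ?_, ?_, fun g hg x hx => ?_⟩
  · refine convexHull_min (fun v hv => ?_) (hZ.convex.linear_image (LinearMap.fst ℝ E ℝ))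
    simp only [Finset.coe_image, Set.Finite.coe_toFinset] at hv
    obtain ⟨q, hq, rfl⟩ := hv
    exact ⟨q, hq.1.1, rfl⟩
  · intro x hx
    rw [Finset.coe_image, hU.coe_toFinset, ← LinearMap.coe_fst (R := ℝ) (M₂ := ℝ),
      ← LinearMap.image_convexHull]
    exact ⟨_, mem_convexHull_upper_extremePoints hZ hf hx, rfl⟩
  · simp only [Finset.mem_image, Set.Finite.mem_toFinset]
    rintro v ⟨q, hq, rfl⟩
    exact hlift q hq ▸ hq.1
  · have h := ((g.comp (LinearMap.fst ℝ E ℝ).toAffineMap -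
      (LinearMap.snd ℝ E ℝ).toAffineMap).concaveOn convex_univ).nonneg_of_mem_convexHull
      (Set.subset_univ U) (fun q hq => ?_) (mem_convexHull_upper_extremePoints hZ hf hx)
    · simpa using h
    · simpa [hq.2] using hg q.1 (Finset.mem_image_of_mem _ (hU.mem_toFinset.2 hq))

end UpperBoundary

/-- The upper-boundary function of a polytope `Z ⊆ ℝ^d × ℝ`, on the projection `Ω` of `Z`,
is concave continuous piecewise linear; moreover it is interpolated by a triangulation of
`Ω` all of whose vertices lift to extreme points of `Z`. -/
theorem upper_boundary_cpl_triangulation {d : ℕ} (Z : Set ((Fin d → ℝ) × ℝ))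
    (hZ : IsPolytope Z) (f : (Fin d → ℝ) → ℝ)
    (hf : ∀ ω ∈ Prod.fst '' Z, IsGreatest {y : ℝ | (ω, y) ∈ Z} (f ω)) :
    IsPolytope (Prod.fst '' Z) ∧
    ConcaveOn ℝ (Prod.fst '' Z) f ∧
    IsPWLOn (Prod.fst '' Z) f ∧ ContinuousOn f (Prod.fst '' Z) ∧
    ∃ γ : Triangulation (Fin d → ℝ) (Prod.fst '' Z),
      IsInterpolation γ f f ∧
      ∀ V ∈ γ.simplices, ∀ v ∈ V, (v, f v) ∈ Set.extremePoints ℝ Z := by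
  have hconc := concaveOn_of_isGreatest hZ.convex hf
  obtain ⟨V, hVΩ, hVext, hmaj⟩ := exists_upper_vertices hZ hf
  obtain ⟨γ, hγ⟩ := exists_triangulation_touching_affine_majorants V f hVΩ
  have hpiece : ∀ W ∈ γ.simplices, ∃ g : (Fin d → ℝ) →ᵃ[ℝ] ℝ,
      (∀ v ∈ W, g v = f v) ∧ Set.EqOn f g (convexHull ℝ ↑W) := by
    intro W hW
    obtain ⟨hWV, g, hg, hgW⟩ := hγ W hW
    exact ⟨g, hgW, hconc.eqOn_convexHull_of_affine_majorant
      (hVΩ ▸ (Finset.coe_subset.2 hWV).trans (subset_convexHull ℝ _)) (hmaj g hg) hgW⟩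
  have hpwl : IsPWLOn (Prod.fst '' Z) f := isPWLOn_of_biUnion_convexHull γ.simplices γ.covers
    fun W hW => (hpiece W hW).imp fun _ => And.right
  refine ⟨hZ.image (LinearMap.fst ℝ _ ℝ), hconc, hpwl, hpwl.continuousOn, γ,
    fun W hW α hα₀ hα₁ => ?_, fun W hW v hv => hVext v ((hγ W hW).1 hv)⟩
  obtain ⟨g, hgW, hfg⟩ := hpiece W hW
  rw [hfg (Finset.mem_convexHull'.2 ⟨α, hα₀, hα₁, rfl⟩), g.apply_sum_smul hα₁]
  exact Finset.sum_congr rfl fun v hv => by rw [hgW v hv]
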